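/- Suppose u : ℂ → ℂ is a non-vanishing entire function of the form u(z) = u(0) e^{a₁ z + a₂ z²} with a₁, a₂ ∈ ℂ. If u belongs to the Fock space F_p for some 0 < p < ∞, then |a₂| < 1/2. -/

import Mathlib

open MeasureTheory Real Complex

/-! If `‖a₂‖ ≥ 1/2`, rotate `z = w ζ` with `|w| = 1` so that `a₂ z² = ‖a₂‖ ζ²` and
`Re (a₁ w) ≥ 0`. On the half-strip `Re ζ ≥ 0, |Im ζ| ≤ 1` the exponent
`Re (a₁ z + a₂ z²) - |z|²/2` is then bounded below, because `‖a₂‖ (Re ζ)²` dominates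
`(Re ζ)²/2`; so the Fock integrand of `u` is bounded below by a positive constant on a set of
infinite measure. -/

namespace Complex

theorem exists_norm_eq_one_mul_sq_eq_norm (a : ℂ) : ∃ w : ℂ, ‖w‖ = 1 ∧ a * w ^ 2 = ‖a‖ := by
  refine ⟨exp (-(arg a * I) / 2), by simp [norm_exp], ?_⟩
  have hsq : exp (-(arg a * I) / 2) ^ 2 = exp (-(arg a * I)) := by
    rw [← exp_nat_mul]; ring_nf
  rw [hsq]
  nth_rw 1 [← norm_mul_exp_arg_mul_I a]
  rw [mul_assoc, ← exp_add, add_neg_cancel, exp_zero, mul_one]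

theorem exists_norm_eq_one_mul_sq_eq_norm_and_re_nonneg (a b : ℂ) :
    ∃ w : ℂ, ‖w‖ = 1 ∧ a * w ^ 2 = ‖a‖ ∧ 0 ≤ (b * w).re := by
  obtain ⟨w, hw, hw_sq⟩ := exists_norm_eq_one_mul_sq_eq_norm a
  by_cases hre : 0 ≤ (b * w).re
  · exact ⟨w, hw, hw_sq, hre⟩
  · refine ⟨-w, by rwa [norm_neg], by rwa [neg_sq], ?_⟩
    rw [mul_neg, neg_re]
    linarith

theorem lintegral_comp_mul_left_of_norm_eq_one {w : ℂ} (hw : ‖w‖ = 1) (f : ℂ → ENNReal) :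
    ∫⁻ z, f (w * z) = ∫⁻ z, f z := by
  let e := rotation ⟨w, mem_sphere_zero_iff_norm.2 hw⟩
  exact e.measurePreserving.lintegral_comp_emb e.toHomeomorph.measurableEmbedding f

theorem volume_re_Ici_inter_im_Icc (a : ℝ) {b c : ℝ} (hbc : b < c) :
    volume (re ⁻¹' Set.Ici a ∩ im ⁻¹' Set.Icc b c) = ⊤ := by
  have hset : re ⁻¹' Set.Ici a ∩ im ⁻¹' Set.Icc b c =
      measurableEquivRealProd ⁻¹' (Set.Ici a ×ˢ Set.Icc b c) := rfl
  rw [hset, volume_preserving_equiv_real_prod.measure_preimage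
      (measurableSet_Ici.prod measurableSet_Icc).nullMeasurableSet,
    Measure.volume_eq_prod, Measure.prod_prod, Real.volume_Ici,
    ENNReal.top_mul (by simpa [Real.volume_Icc] using hbc)]

theorem neg_le_re_mul_add_mul_sq_sub_norm_sq_div_two {b ζ : ℂ} {r : ℝ} (hb : 0 ≤ b.re)
    (hr : 1 / 2 ≤ r) (hζre : 0 ≤ ζ.re) (hζim : |ζ.im| ≤ 1) :
    -(‖b‖ + r + 1 / 2) ≤ (b * ζ + r * ζ ^ 2).re - ‖ζ‖ ^ 2 / 2 := by
  have hexpand : (b * ζ + r * ζ ^ 2).re - ‖ζ‖ ^ 2 / 2 =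
      b.re * ζ.re - b.im * ζ.im + (r - 1 / 2) * ζ.re ^ 2 - (r + 1 / 2) * ζ.im ^ 2 := by
    rw [Complex.sq_norm, normSq_apply]
    simp only [add_re, mul_re, ofReal_re, ofReal_im, sq, mul_im]
    ring
  have hbim : |b.im * ζ.im| ≤ ‖b‖ := by
    rw [abs_mul]
    simpa using mul_le_mul (abs_im_le_norm b) hζim (abs_nonneg _) (norm_nonneg b)
  have him_sq : ζ.im ^ 2 ≤ 1 := by
    simpa using pow_le_pow_left₀ (abs_nonneg _) hζim 2
  rw [hexpand]
  nlinarith [mul_nonneg hb hζre, abs_le.1 hbim, sq_nonneg ζ.re,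
    mul_nonneg (sub_nonneg.2 hr) (sq_nonneg ζ.re)]

theorem norm_mul_exp_rpow_mul_exp (c q z : ℂ) (p : ℝ) :
    ‖c * exp q‖ ^ p * Real.exp (-p * ‖z‖ ^ 2 / 2) =
      ‖c‖ ^ p * Real.exp (p * (q.re - ‖z‖ ^ 2 / 2)) := by
  rw [norm_mul, norm_exp, Real.mul_rpow (norm_nonneg _) (Real.exp_pos _).le, ← Real.exp_mul,
    mul_assoc, ← Real.exp_add]
  ring_nf

end Complex

theorem MeasureTheory.lintegral_eq_top_of_forall_le_of_measure_eq_top {α : Type*}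
    [MeasurableSpace α] {μ : Measure α} {s : Set α} {f : α → ENNReal} {c : ENNReal}
    (hs : MeasurableSet s) (hμs : μ s = ⊤) (hc : c ≠ 0) (hf : ∀ x ∈ s, c ≤ f x) :
    ∫⁻ x, f x ∂μ = ⊤ :=
  eq_top_iff.2 <| calc
    ⊤ = c * μ s := by rw [hμs, ENNReal.mul_top hc]
    _ = ∫⁻ _ in s, c ∂μ := (setLIntegral_const s c).symm
    _ ≤ ∫⁻ x in s, f x ∂μ := setLIntegral_mono' hs hf
    _ ≤ ∫⁻ x, f x ∂μ := setLIntegral_le_lintegral s f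

theorem nonvanishing_type (u : ℂ → ℂ) (a₁ a₂ : ℂ)
    (hform : ∀ z : ℂ, u z = u 0 * Complex.exp (a₁ * z + a₂ * z ^ 2))
    (hnv : ∀ z : ℂ, u z ≠ 0) (p : ℝ) (hp : 0 < p)
    (hu : (∫⁻ z : ℂ, ENNReal.ofReal
        (‖u z‖ ^ p * Real.exp (-p * ‖z‖ ^ 2 / 2))) < ⊤) :
    ‖a₂‖ < 1 / 2 := by
  by_contra! ha₂
  obtain ⟨w, hw, hw_sq, hw_re⟩ := exists_norm_eq_one_mul_sq_eq_norm_and_re_nonneg a₂ a₁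
  set C := ‖a₁ * w‖ + ‖a₂‖ + 1 / 2
  have hε : 0 < ‖u 0‖ ^ p * Real.exp (-(p * C)) := by
    have := norm_pos_iff.2 (hnv 0)
    positivity
  refine hu.ne ?_
  rw [← lintegral_comp_mul_left_of_norm_eq_one hw]
  refine lintegral_eq_top_of_forall_le_of_measure_eq_top
    ((measurable_re measurableSet_Ici).inter (measurable_im measurableSet_Icc))
    (volume_re_Ici_inter_im_Icc 0 (by norm_num : (-1 : ℝ) < 1))
    (ENNReal.ofReal_pos.2 hε).ne' fun ζ ⟨hζre, hζim⟩ ↦ ENNReal.ofReal_le_ofReal ?_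
  have hbound := neg_le_re_mul_add_mul_sq_sub_norm_sq_div_two hw_re ha₂ hζre
    (abs_le.2 hζim)
  have hrotate : a₁ * (w * ζ) + a₂ * (w * ζ) ^ 2 = a₁ * w * ζ + ‖a₂‖ * ζ ^ 2 := by
    rw [← hw_sq]; ring
  rw [hform (w * ζ), norm_mul_exp_rpow_mul_exp, hrotate, norm_mul, hw, one_mul]
  gcongr
  rw [← mul_neg]
  exact mul_le_mul_of_nonneg_left hbound hp.le
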